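/- Let 𝒳 = Bl_S(ℙ²_ℤ) with exceptional divisor E and ℒ = O(−K_{𝒳/ℤ}), and for distinct primes p₁ < … < p_m let 𝒳(p₁,…,p_m) be the blow-up of 𝒳 along ∪ᵢ E|_{𝒳_{pᵢ}} with ℒ(p₁,…,p_m) = π*ℒ(−ΣFᵢ). Suppose each blow-up step changes the two intersection numbers in h_K by explicit multiples of log(pᵢ), namely (ℒ̄^{n+1}) decreases by α·log pᵢ and ((ℒ̄)^n·K̄) changes by β·log pᵢ, where the combination −n(L^{n−1}·K_X)·(−α) + (n+1)(L^n)·β =: −c·[K:ℚ] < 0 is computed from local intersection numbers on the blow-up of a surface fiber. Then, by additivity over the primes, h_K(𝒳(p₁,…,p_m), ℒ(p₁,…,p_m), h) = h_K(𝒳, ℒ, h) − c·Σᵢ log(pᵢ) with c > 0 independent of the choice of primes, and hence the family of heights h_K(𝒳(p₁,…,p_m), ℒ(p₁,…,p_m), h) is unbounded below, since Σᵢ log pᵢ → ∞ over growing sets of primes. -/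
import Mathlib


/-- Arakelov K-instability of the blown-up plane, bookkeeping core. For a finite
set `S` of primes, let `(𝒳(S), ℒ(S))` be the model obtained by blowing up the
exceptional curves over the primes of `S`, with arithmetic intersection numbers
`I1 S = (ℒ̄(S))^{n+1}` and `I2 S = ((ℒ̄(S))^n·K̄)`: each blow-up at a new prime `q`
decreases `I1` by `α·log q` and changes `I2` by `β·log q`, where the combination
`−n·A·(−α) + (n+1)·B·β = −c·[K:ℚ]` with `c > 0` (computed from local intersection
numbers; `A = (L^{n−1}·K_X)`, `B = (L^n)`, `d = [K:ℚ] > 0`). Then, with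
`H S = h_K(𝒳(S),ℒ(S),h) = (1/d)(−n·A·I1 S + (n+1)·B·I2 S)`, one has
`H S = H ∅ − c·Σ_{q∈S} log q`, and consequently `h_K` is unbounded below over
models: for every `M` there is a set of primes `S` with `H S < M`. -/
theorem arakelov_K_unstable_blowup
    (n : ℕ) (A B d c α β : ℝ) (hd : 0 < d) (hc : 0 < c)
    (hcomb : -(n : ℝ) * A * (-α) + ((n : ℝ) + 1) * B * β = -c * d)
    (I1 I2 : Finset ℕ → ℝ)
    (hI1 : ∀ (S : Finset ℕ) (q : ℕ), q.Prime → q ∉ S →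
      I1 (insert q S) = I1 S - α * Real.log q)
    (hI2 : ∀ (S : Finset ℕ) (q : ℕ), q.Prime → q ∉ S →
      I2 (insert q S) = I2 S + β * Real.log q)
    (H : Finset ℕ → ℝ)
    (hH : ∀ S, H S = (1 / d) * (-(n : ℝ) * A * I1 S + ((n : ℝ) + 1) * B * I2 S)) :
    (∀ S : Finset ℕ, (∀ q ∈ S, Nat.Prime q) →
        H S = H ∅ - c * ∑ q ∈ S, Real.log q)
    ∧ ∀ M : ℝ, ∃ S : Finset ℕ, (∀ q ∈ S, Nat.Prime q) ∧ H S < M := by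
  have key : ∀ S : Finset ℕ, (∀ q ∈ S, Nat.Prime q) →
      H S = H ∅ - c * ∑ q ∈ S, Real.log q := by
    intro S
    induction S using Finset.induction_on with
    | empty => intro _; simp
    | @insert q S hq ih =>
      intro hp
      have hprime : q.Prime := hp q (Finset.mem_insert_self q S)
      have hSp : ∀ r ∈ S, Nat.Prime r := fun r hr => hp r (Finset.mem_insert_of_mem hr)
      have h1 := hI1 S q hprime hq
      have h2 := hI2 S q hprime hq
      rw [hH (insert q S), h1, h2, Finset.sum_insert hq]
      have := ih hSp
      rw [hH S] at this
      have hstep : (1 / d) * (-(n : ℝ) * A * (I1 S - α * Real.log q)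
          + ((n : ℝ) + 1) * B * (I2 S + β * Real.log q))
          = (1 / d) * (-(n : ℝ) * A * I1 S + ((n : ℝ) + 1) * B * I2 S)
            + (1 / d) * ((-(n : ℝ) * A * (-α) + ((n : ℝ) + 1) * B * β) * Real.log q) := by
        ring
      rw [hstep, hcomb, this]
      field_simp
      ring
  refine ⟨key, fun M => ?_⟩
  set x := (H ∅ - M) / c with hx
  obtain ⟨p, hpN, hp⟩ := Nat.exists_infinite_primes (⌈Real.exp x⌉₊ + 2)
  refine ⟨{p}, fun q hq => (Finset.mem_singleton.mp hq) ▸ hp, ?_⟩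
  have hlog : x < Real.log p := by
    have h1 : Real.exp x < (p : ℝ) := by
      calc Real.exp x ≤ (⌈Real.exp x⌉₊ : ℝ) := Nat.le_ceil _
        _ < (⌈Real.exp x⌉₊ + 2 : ℕ) := by exact_mod_cast by omega
        _ ≤ p := by exact_mod_cast hpN
    have := Real.log_lt_log (Real.exp_pos x) h1
    rwa [Real.log_exp] at this
  have hS : H {p} = H ∅ - c * Real.log p := by
    have := key {p} (fun q hq => Finset.mem_singleton.mp hq ▸ hp)
    simpa using this
  rw [hS]
  have : c * x < c * Real.log p := by exact (mul_lt_mul_iff_right₀ hc).2 hlog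
  rw [hx] at this
  rw [mul_div_cancel₀ _ (ne_of_gt hc)] at this
  linarith
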